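/- On $\mathbb{C}^2 \setminus \{0\}$ with $\rho = |z_1|^2 + |z_2|^2$, for $a > 0$ let $f_a(\rho) = \rho\sqrt{1 + a^2/\rho^2} + a \log\big(\rho / (a + \sqrt{a^2 + \rho^2})\big)$. Then the Kähler form $\omega_a = \sqrt{-1}\,\partial\bar\partial f_a$ is a Ricci-flat Kähler metric on $\mathbb{C}^2 \setminus \{0\}$, i.e., its Ricci form vanishes identically; equivalently $\det(\partial_i \partial_{\bar j} f_a) $ is a positive constant. -/

import Mathlib

/-!
With `s = √(a² + ρ²)`, on `ρ > 0` the potential is `f_a = s + a log ρ - a log (a + s)`, and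
differentiating gives `f_a' = s / ρ`. So `ρ f_a' = s`, whence `f_a' + ρ f_a'' = (ρ f_a')' = ρ / s`
and `f_a' (f_a' + ρ f_a'') = 1`.
-/

noncomputable def fEH (a ρ : ℝ) : ℝ :=
  ρ * Real.sqrt (1 + a ^ 2 / ρ ^ 2) +
    a * Real.log (ρ / (a + Real.sqrt (a ^ 2 + ρ ^ 2)))

open Filter Topology Real

/-- `f' + ρ f'' = (ρ f')'`, with `g = ρ f'`. -/
lemma deriv_add_mul_deriv_deriv_eq {f g : ℝ → ℝ} {g' ρ : ℝ} (hρ : ρ ≠ 0)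
    (hf : deriv f =ᶠ[𝓝 ρ] fun x => g x / x) (hg : HasDerivAt g g' ρ) :
    deriv f ρ + ρ * deriv (deriv f) ρ = g' := by
  have hg_div : HasDerivAt (fun x => g x / x) ((g' * ρ - g ρ * 1) / ρ ^ 2) ρ :=
    hg.div (hasDerivAt_id' ρ) hρ
  rw [hf.eq_of_nhds, hf.deriv_eq, hg_div.deriv]
  field_simp
  ring

lemma abs_lt_sqrt_sq_add_sq (a : ℝ) {ρ : ℝ} (hρ : ρ ≠ 0) : |a| < √(a ^ 2 + ρ ^ 2) :=
  (lt_sqrt (abs_nonneg a)).2 (by rw [sq_abs]; exact lt_add_of_pos_right _ (by positivity))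

lemma add_sqrt_sq_add_sq_pos (a : ℝ) {ρ : ℝ} (hρ : ρ ≠ 0) : 0 < a + √(a ^ 2 + ρ ^ 2) := by
  linarith [neg_abs_le a, abs_lt_sqrt_sq_add_sq a hρ]

lemma hasDerivAt_sqrt_sq_add_sq (a : ℝ) {ρ : ℝ} (h : a ^ 2 + ρ ^ 2 ≠ 0) :
    HasDerivAt (fun x => √(a ^ 2 + x ^ 2)) (ρ / √(a ^ 2 + ρ ^ 2)) ρ := by
  convert ((hasDerivAt_pow 2 ρ).const_add (a ^ 2)).sqrt h using 1
  field_simp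
  push_cast
  ring

lemma fEH_eq (a : ℝ) {ρ : ℝ} (hρ : 0 < ρ) :
    fEH a ρ = √(a ^ 2 + ρ ^ 2) + a * log ρ - a * log (a + √(a ^ 2 + ρ ^ 2)) := by
  have hsqrt : √(a ^ 2 + ρ ^ 2) = ρ * √(1 + a ^ 2 / ρ ^ 2) := by
    rw [show a ^ 2 + ρ ^ 2 = ρ ^ 2 * (1 + a ^ 2 / ρ ^ 2) by field_simp; ring,
      sqrt_mul (by positivity), sqrt_sq hρ.le]
  rw [fEH, hsqrt, log_div hρ.ne' (hsqrt ▸ add_sqrt_sq_add_sq_pos a hρ.ne').ne']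
  ring

lemma hasDerivAt_fEH (a : ℝ) {ρ : ℝ} (hρ : 0 < ρ) :
    HasDerivAt (fEH a) (√(a ^ 2 + ρ ^ 2) / ρ) ρ := by
  have has : 0 < a + √(a ^ 2 + ρ ^ 2) := add_sqrt_sq_add_sq_pos a hρ.ne'
  have hds := hasDerivAt_sqrt_sq_add_sq a (ρ := ρ) (by positivity)
  have hdiff : HasDerivAt
      (fun x => √(a ^ 2 + x ^ 2) + a * log x - a * log (a + √(a ^ 2 + x ^ 2)))
      (ρ / √(a ^ 2 + ρ ^ 2) + a * ρ⁻¹ -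
        a * (ρ / √(a ^ 2 + ρ ^ 2) / (a + √(a ^ 2 + ρ ^ 2)))) ρ :=
    (hds.add ((hasDerivAt_log hρ.ne').const_mul a)).sub
      (((hds.const_add a).log has.ne').const_mul a)
  have hlocal : fEH a =ᶠ[𝓝 ρ]
      fun x => √(a ^ 2 + x ^ 2) + a * log x - a * log (a + √(a ^ 2 + x ^ 2)) := by
    filter_upwards [eventually_gt_nhds hρ] with x hx using fEH_eq a hx
  refine (hdiff.congr_of_eventuallyEq hlocal).congr_deriv ?_
  set s := √(a ^ 2 + ρ ^ 2)
  have hs : 0 < s := sqrt_pos.2 (by positivity)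
  have hs_sq : s ^ 2 = a ^ 2 + ρ ^ 2 := sq_sqrt (by positivity)
  field_simp
  linear_combination (-s) * hs_sq

lemma deriv_fEH_eventuallyEq (a : ℝ) {ρ : ℝ} (hρ : 0 < ρ) :
    deriv (fEH a) =ᶠ[𝓝 ρ] fun x => √(a ^ 2 + x ^ 2) / x := by
  filter_upwards [eventually_gt_nhds hρ] with x hx using (hasDerivAt_fEH a hx).deriv

lemma deriv_fEH_add_mul_deriv_deriv (a : ℝ) {ρ : ℝ} (hρ : 0 < ρ) :
    deriv (fEH a) ρ + ρ * deriv (deriv (fEH a)) ρ = ρ / √(a ^ 2 + ρ ^ 2) :=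
  deriv_add_mul_deriv_deriv_eq hρ.ne' (deriv_fEH_eventuallyEq a hρ)
    (hasDerivAt_sqrt_sq_add_sq a (by positivity))

theorem eguchiHanson_ricci_flat_general (a : ℝ) :
    (∀ ρ : ℝ, 0 < ρ →
        0 < deriv (fEH a) ρ ∧ 0 < deriv (fEH a) ρ + ρ * deriv (deriv (fEH a)) ρ) ∧
    ∃ c : ℝ, 0 < c ∧ ∀ ρ : ℝ, 0 < ρ →
        deriv (fEH a) ρ * (deriv (fEH a) ρ + ρ * deriv (deriv (fEH a)) ρ) = c := by
  refine ⟨fun ρ hρ => ?_, 1, one_pos, fun ρ hρ => ?_⟩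
  all_goals
    have hs : 0 < √(a ^ 2 + ρ ^ 2) := sqrt_pos.2 (by positivity)
    rw [deriv_fEH_add_mul_deriv_deriv a hρ, (hasDerivAt_fEH a hρ).deriv]
  · exact ⟨by positivity, by positivity⟩
  · field_simp

/-- for `a > 0`, the form `ω_a = √-1 ∂∂̄ f_a(ρ)` is a Ricci-flat Kähler
metric on `ℂ² \ {0}`.  For a rotation-invariant potential `f(ρ)` on `ℂ²` the complex
Hessian `(∂_i ∂_{j̄} f)` has eigenvalues `f'` and `f' + ρ f''`, so being a Kähler metric
means `f' > 0` and `f' + ρ f'' > 0`, and Ricci-flatness is equivalent to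
`det(∂_i ∂_{j̄} f) = f'(ρ) · (f'(ρ) + ρ f''(ρ))` being a positive constant. -/
theorem eguchiHanson_ricci_flat (a : ℝ) (ha : 0 < a) :
    (∀ ρ : ℝ, 0 < ρ →
        0 < deriv (fEH a) ρ ∧ 0 < deriv (fEH a) ρ + ρ * deriv (deriv (fEH a)) ρ) ∧
    ∃ c : ℝ, 0 < c ∧ ∀ ρ : ℝ, 0 < ρ →
        deriv (fEH a) ρ * (deriv (fEH a) ρ + ρ * deriv (deriv (fEH a)) ρ) = c :=
  eguchiHanson_ricci_flat_general a
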